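/- arXiv:1902.01981 — 2 statements merged into one kernel-verified Lean document; each statement's English description precedes it below -/
import Mathlib

section
/- For integers n > s+1 > 0 and L ≥ 2, the computation load of CodedReduce is strictly smaller than that of Gradient Coding with the same straggler fraction: 1/( (n/(s+1)) + ... + (n/(s+1))^L ) < (s+1)/n. -/
open Finset

theorem lt_sum_Icc_one_pow {R : Type*} [Semiring R] [PartialOrder R] [IsStrictOrderedRing R]
    {q : R} (hq : 0 < q) {L : ℕ} (hL : 2 ≤ L) : q < ∑ l ∈ Icc 1 L, q ^ l := by
  simpa using single_lt_sum (f := (q ^ ·)) (i := 1) (j := 2) (by norm_num)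
    (by rw [mem_Icc]; omega) (by rw [mem_Icc]; omega) (pow_pos hq 2) fun k _ _ => (pow_pos hq k).le

/-- for `n > s+1 > 0` and `L ≥ 2`, the CodedReduce computation load is strictly
smaller than that of Gradient Coding with the same straggler fraction:
`1/((n/(s+1)) + ⋯ + (n/(s+1))^L) < (s+1)/n`. -/
theorem stmt1 (n s L : ℕ) (hs : s + 1 < n) (hL : 2 ≤ L) :
    (1 : ℝ) / (∑ l ∈ Finset.Icc 1 L, ((n : ℝ) / (s + 1)) ^ l) < ((s : ℝ) + 1) / n := by
  have hq : (0 : ℝ) < n / (s + 1) := by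
    have : 0 < n := by omega
    positivity
  calc (1 : ℝ) / (∑ l ∈ Icc 1 L, ((n : ℝ) / (s + 1)) ^ l) < 1 / (n / (s + 1)) :=
        one_div_lt_one_div_of_lt hq (lt_sum_Icc_one_pow hq hL)
    _ = ((s : ℝ) + 1) / n := one_div_div _ _
end

section
/- In an (n,L)-regular tree with the CodedReduce allocation (each data point replicated in s+1 of the n sibling subtrees at every level, each node keeping r·d points), the size of the data set assigned to each subtree at layer l satisfies |D^{T(l,i)}| = ((s+1)/n)^l · d - r·d · Σ_{j=1}^{l-1} ((s+1)/n)^j for all i, where r = r_CR. -/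
open Finset

theorem sum_Icc_one_succ_pow {R : Type*} [CommRing R] (q : R) (m : ℕ) :
    ∑ j ∈ Icc 1 (m + 1), q ^ j = q * (1 + ∑ j ∈ Icc 1 m, q ^ j) := by
  induction m with
  | zero => simp
  | succ m ih =>
    rw [sum_Icc_succ_top (by omega), ih]
    rw [sum_Icc_succ_top (by omega)] at ih
    linear_combination q * ih

theorem eq_pow_mul_sub_mul_sum_of_affine_rec {R : Type*} [CommRing R] (q c d : R) (L : ℕ)
    (a : ℕ → R) (h₁ : a 1 = q * d) (hrec : ∀ l, 1 ≤ l → l < L → a (l + 1) = q * (a l - c)) :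
    ∀ l, 1 ≤ l → l ≤ L → a l = q ^ l * d - c * ∑ j ∈ Icc 1 (l - 1), q ^ j := by
  intro l hl
  induction l, hl using Nat.le_induction with
  | base => exact fun _ => by simpa using h₁
  | succ l hl ih =>
    intro hlL
    obtain ⟨m, rfl⟩ : ∃ m, l = m + 1 := ⟨l - 1, by omega⟩
    rw [hrec (m + 1) hl (by omega), ih (by omega), Nat.add_sub_cancel, Nat.add_sub_cancel,
      sum_Icc_one_succ_pow]
    ring

theorem stmt3_general (n s L : ℕ) (d : ℝ)
    (r : ℝ)
    (a : ℕ → ℝ) (ha1 : a 1 = ((s + 1 : ℝ) / n) * d)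
    (harec : ∀ l, 1 ≤ l → l ≤ L - 1 → a (l + 1) = ((s + 1 : ℝ) / n) * (a l - r * d)) :
    ∀ l, 1 ≤ l → l ≤ L →
      a l = ((s + 1 : ℝ) / n) ^ l * d - r * d * ∑ j ∈ Finset.Icc 1 (l - 1), ((s + 1 : ℝ) / n) ^ j :=
  eq_pow_mul_sub_mul_sum_of_affine_rec _ _ d L a ha1
    fun l hl hlL => harec l hl (by omega)

/-- in an `(n,L)`-regular tree with the CodedReduce allocation, the subtree data
set sizes `a l = |D^{T(l,i)}|` (identical across siblings `i`) satisfy the recursion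
`a 1 = ((s+1)/n)·d`, `a (l+1) = ((s+1)/n)·(a l − r·d)`, and hence for all `1 ≤ l ≤ L`,
`a l = ((s+1)/n)^l · d − r·d · ∑_{j=1}^{l-1} ((s+1)/n)^j`, where `r = r_CR`. -/
theorem stmt3 (n s L : ℕ) (hs : s < n) (hL : 1 ≤ L) (d : ℝ) (hd : 0 < d)
    (r : ℝ) (hr : r = 1 / (∑ l ∈ Finset.Icc 1 L, ((n : ℝ) / (s + 1)) ^ l))
    (a : ℕ → ℝ) (ha1 : a 1 = ((s + 1 : ℝ) / n) * d)
    (harec : ∀ l, 1 ≤ l → l ≤ L - 1 → a (l + 1) = ((s + 1 : ℝ) / n) * (a l - r * d)) :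
    ∀ l, 1 ≤ l → l ≤ L →
      a l = ((s + 1 : ℝ) / n) ^ l * d - r * d * ∑ j ∈ Finset.Icc 1 (l - 1), ((s + 1 : ℝ) / n) ^ j :=
  stmt3_general n s L d r a ha1 harec
end
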